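/- arXiv:2001.06633 — 5 statements merged into one kernel-verified Lean document; each statement's English description precedes it below -/
import Mathlib

section
/- Let (α_j)_{j≥1} and (β_j)_{j≥1} be nonnegative real sequences and L the strictly lower-triangular Toeplitz operator defined by (Lα)_i = ∑_{j=1}^{i−1} c_{i−j} α_j for a nonnegative summable sequence (c_k)_{k≥1} with ∑_k c_k < 1. If α ≤ Lα + β pointwise and α is bounded, then ∑_j α_j ≤ (∑_j β_j)/(1 − ∑_k c_k). -/
/-!
Summing `α ≤ Lα + β` over `i < n` and exchanging the two sums, each `α j` is weighted by
`∑_{j < i < n} c (i - j) ≤ ∑ c`, so the partial sums `S n` of `α` satisfy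
`S n ≤ (∑ c) S n + ∑ β`. As `∑ c < 1`, this bounds every `S n` by `(∑ β) / (1 - ∑ c)`.
-/

open Finset

def lowerToeplitz (c a : ℕ → ℝ) (i : ℕ) : ℝ := ∑ j ∈ range i, c (i - j) * a j

section

variable {c : ℕ → ℝ}

lemma sum_Ioo_sub_le_tsum (hc : ∀ k, 0 ≤ c k) (hcs : Summable c) (j n : ℕ) :
    ∑ i ∈ Ioo j n, c (i - j) ≤ ∑' k, c k := by
  have hinj : Set.InjOn (· - j) (Ioo j n : Set ℕ) := by
    intro a ha b hb hab
    simp only [coe_Ioo, Set.mem_Ioo] at ha hb hab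
    omega
  rw [← sum_image hinj]
  exact hcs.sum_le_tsum _ fun k _ => hc k

lemma sum_range_lowerToeplitz_le (hc : ∀ k, 0 ≤ c k) (hcs : Summable c) {a : ℕ → ℝ}
    (ha : ∀ j, 0 ≤ a j) (n : ℕ) :
    ∑ i ∈ range n, lowerToeplitz c a i ≤ (∑' k, c k) * ∑ j ∈ range n, a j := by
  have hswap : ∑ i ∈ range n, lowerToeplitz c a i
      = ∑ j ∈ range n, (∑ i ∈ Ioo j n, c (i - j)) * a j := by
    simp only [lowerToeplitz, sum_mul]
    refine sum_comm' fun i j => ?_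
    simp only [mem_range, mem_Ioo]
    omega
  rw [hswap, mul_sum]
  exact sum_le_sum fun j _ => mul_le_mul_of_nonneg_right (sum_Ioo_sub_le_tsum hc hcs j n) (ha j)

lemma sum_range_le_of_le_lowerToeplitz_add (hc : ∀ k, 0 ≤ c k) (hcs : Summable c)
    (hc1 : ∑' k, c k < 1) {α β : ℕ → ℝ} (hα : ∀ i, 0 ≤ α i) (hβ : ∀ i, 0 ≤ β i)
    (hβs : Summable β) (hrec : ∀ i, α i ≤ lowerToeplitz c α i + β i) (n : ℕ) :
    ∑ i ∈ range n, α i ≤ (∑' j, β j) / (1 - ∑' k, c k) := by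
  have hS : ∑ i ∈ range n, α i ≤ (∑' k, c k) * ∑ i ∈ range n, α i + ∑' j, β j :=
    calc ∑ i ∈ range n, α i
        ≤ ∑ i ∈ range n, lowerToeplitz c α i + ∑ i ∈ range n, β i := by
          rw [← sum_add_distrib]; exact sum_le_sum fun i _ => hrec i
      _ ≤ (∑' k, c k) * ∑ i ∈ range n, α i + ∑' j, β j :=
          add_le_add (sum_range_lowerToeplitz_le hc hcs hα n)
            (hβs.sum_le_tsum _ fun i _ => hβ i)
  rw [le_div_iff₀ (by linarith)]
  linarith

end

theorem stmt_3_general (α β c : ℕ → ℝ)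
    (hαnn : ∀ i, 0 ≤ α i) (hβnn : ∀ i, 0 ≤ β i) (hcnn : ∀ i, 0 ≤ c i)
    (hcsum : Summable c) (hc1 : ∑' k, c k < 1)
    (hβsum : Summable β)
    (hrec : ∀ i, α i ≤ (∑ j ∈ Finset.range i, c (i - j) * α j) + β i) :
    Summable α ∧ ∑' j, α j ≤ (∑' j, β j) / (1 - ∑' k, c k) := by
  have hpartial := sum_range_le_of_le_lowerToeplitz_add hcnn hcsum hc1 hαnn hβnn hβsum hrec
  have hα : Summable α := summable_of_sum_range_le hαnn hpartial
  exact ⟨hα, hα.tsum_le_of_sum_range_le hpartial⟩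

/-- If a bounded nonnegative sequence `α` (indexed from 1, `α 0 = 0`)
satisfies `α ≤ Lα + β` pointwise, where `L` is the strictly lower-triangular Toeplitz
operator with nonnegative summable symbol `c` with `∑ c < 1`, then
`∑ α ≤ (∑ β)/(1 − ∑ c)`. -/
theorem stmt_3 (α β c : ℕ → ℝ)
    (hα0 : α 0 = 0) (hβ0 : β 0 = 0) (hc0 : c 0 = 0)
    (hαnn : ∀ i, 0 ≤ α i) (hβnn : ∀ i, 0 ≤ β i) (hcnn : ∀ i, 0 ≤ c i)
    (hcsum : Summable c) (hc1 : ∑' k, c k < 1)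
    (hβsum : Summable β)
    (hbdd : ∃ M, ∀ i, α i ≤ M)
    (hrec : ∀ i, α i ≤ (∑ j ∈ Finset.range i, c (i - j) * α j) + β i) :
    Summable α ∧ ∑' j, α j ≤ (∑' j, β j) / (1 - ∑' k, c k) :=
  stmt_3_general α β c hαnn hβnn hcnn hcsum hc1 hβsum hrec
end

section
/- Let (Var_k)_{k≥0} be a sequence in [0,1) with Γ := ∏_{k=0}^∞(1 − Var_k) > 0, and let γ_k be defined by γ_1 = Var_0, γ_k = Var_{k−1} ∏_{i=0}^{k−2}(1 − Var_i). If a bounded nonnegative sequence (α_j)_{j≥1} satisfies the renewal inequality α_j ≤ γ_j + ∑_{k=1}^{j−1} γ_{j−k} α_k for all j ≥ 1, then ∑_{j=1}^∞ α_j ≤ (1 − Γ)/Γ. -/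
/-!
The weights `γ k = Var (k-1) ∏_{i<k-1} (1 - Var i)` telescope:
`∑_{k=1}^{n} γ k = 1 - ∏_{i<n} (1 - Var i)`, so every partial sum of `γ` is at most
`c = 1 - Γ < 1`. Summing the renewal inequality over `1 ≤ j < N` and exchanging the double sum
bounds the partial sum `A` of `α` by `c + c A`, hence `A ≤ c / (1 - c) = (1 - Γ) / Γ`.
-/

open Finset

theorem Finset.sum_range_mul_prod_one_sub {R : Type*} [CommRing R] (x : ℕ → R) (n : ℕ) :
    ∑ k ∈ range n, x k * ∏ i ∈ range k, (1 - x i) = 1 - ∏ i ∈ range n, (1 - x i) := by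
  induction n with
  | zero => simp
  | succ n ih => rw [sum_range_succ, ih, prod_range_succ]; ring

theorem Finset.antitone_prod_range_one_sub {x : ℕ → ℝ} (hx : ∀ k, x k ∈ Set.Icc (0 : ℝ) 1) :
    Antitone fun n => ∏ k ∈ range n, (1 - x k) := by
  refine antitone_nat_of_succ_le fun n => ?_
  rw [prod_range_succ]
  exact mul_le_of_le_one_right (prod_nonneg fun k _ => sub_nonneg.2 (hx k).2)
    (sub_le_self _ (hx n).1)

theorem Finset.sum_Ico_succ_sub_eq_sum_Ico {M : Type*} [AddCommMonoid M] (f : ℕ → M) {k N : ℕ}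
    (hk : k ≤ N) :
    ∑ j ∈ Ico (k + 1) N, f (j - k) = ∑ m ∈ Ico 1 (N - k), f m := by
  obtain ⟨N, rfl⟩ := Nat.exists_eq_add_of_le hk
  rw [Nat.add_sub_cancel_left, add_comm k 1, add_comm k N, ← sum_Ico_add']
  simp

section Renewal

variable {K : Type*} [Field K] [LinearOrder K] [IsStrictOrderedRing K]
  {γ α : ℕ → K} {c : K}

theorem sum_Ico_le_add_mul_of_le_renewal (hγ : ∀ n, ∑ k ∈ Ico 1 n, γ k ≤ c)
    (hα : ∀ j, 0 ≤ α j) (hrec : ∀ j, 1 ≤ j → α j ≤ γ j + ∑ k ∈ Ico 1 j, γ (j - k) * α k)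
    (N : ℕ) : ∑ j ∈ Ico 1 N, α j ≤ c + c * ∑ j ∈ Ico 1 N, α j :=
  calc ∑ j ∈ Ico 1 N, α j
      ≤ ∑ j ∈ Ico 1 N, (γ j + ∑ k ∈ Ico 1 j, γ (j - k) * α k) :=
        sum_le_sum fun j hj => hrec j (mem_Ico.1 hj).1
    _ = ∑ j ∈ Ico 1 N, γ j + ∑ k ∈ Ico 1 N, (∑ j ∈ Ico (k + 1) N, γ (j - k)) * α k := by
        simp only [sum_add_distrib, sum_Ico_Ico_comm', sum_mul]
    _ ≤ c + ∑ k ∈ Ico 1 N, c * α k := by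
        gcongr with k hk
        · exact hγ N
        · exact hα k
        · rw [sum_Ico_succ_sub_eq_sum_Ico _ (mem_Ico.1 hk).2.le]
          exact hγ _
    _ = c + c * ∑ j ∈ Ico 1 N, α j := by rw [mul_sum]

theorem sum_Ico_le_div_of_le_renewal (hc : c < 1) (hγ : ∀ n, ∑ k ∈ Ico 1 n, γ k ≤ c)
    (hα : ∀ j, 0 ≤ α j) (hrec : ∀ j, 1 ≤ j → α j ≤ γ j + ∑ k ∈ Ico 1 j, γ (j - k) * α k)
    (N : ℕ) : ∑ j ∈ Ico 1 N, α j ≤ c / (1 - c) := by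
  rw [le_div_iff₀ (sub_pos.2 hc)]
  linarith [sum_Ico_le_add_mul_of_le_renewal hγ hα hrec N]

end Renewal

theorem summable_and_tsum_le_of_le_renewal {γ α : ℕ → ℝ} {c : ℝ} (hc : c < 1)
    (hγ : ∀ n, ∑ k ∈ Ico 1 n, γ k ≤ c) (hα0 : α 0 = 0) (hα : ∀ j, 0 ≤ α j)
    (hrec : ∀ j, 1 ≤ j → α j ≤ γ j + ∑ k ∈ Ico 1 j, γ (j - k) * α k) :
    Summable α ∧ ∑' j, α j ≤ c / (1 - c) := by
  have hrange : ∀ N, ∑ j ∈ range N, α j ≤ c / (1 - c) := by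
    rintro (_ | N)
    · simpa using div_nonneg (by simpa using hγ 0) (sub_nonneg.2 hc.le)
    · rw [range_eq_Ico, sum_eq_sum_Ico_succ_bot N.succ_pos, hα0, zero_add]
      exact sum_Ico_le_div_of_le_renewal hc hγ hα hrec _
  exact ⟨summable_of_sum_range_le hα hrange, Real.tsum_le_of_sum_range_le hα hrange⟩

theorem stmt_5_general (Var : ℕ → ℝ) (hVar : ∀ k, Var k ∈ Set.Ico (0 : ℝ) 1)
    (Γ : ℝ) (hΓpos : 0 < Γ)
    (hΓ : Filter.Tendsto (fun n => ∏ k ∈ Finset.range n, (1 - Var k))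
      Filter.atTop (nhds Γ))
    (γ : ℕ → ℝ)
    (hγ : ∀ k, 1 ≤ k → γ k = Var (k - 1) * ∏ i ∈ Finset.range (k - 1), (1 - Var i))
    (α : ℕ → ℝ) (hα0 : α 0 = 0) (hαnn : ∀ j, 0 ≤ α j)
    (hrec : ∀ j, 1 ≤ j → α j ≤ γ j + ∑ k ∈ Finset.Ico 1 j, γ (j - k) * α k) :
    Summable α ∧ ∑' j, α j ≤ (1 - Γ) / Γ := by
  have hΓ_le : ∀ n, Γ ≤ ∏ k ∈ range n, (1 - Var k) :=
    (antitone_prod_range_one_sub fun k => Set.Ico_subset_Icc_self (hVar k)).le_of_tendsto hΓ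
  have hγ_sum : ∀ n, ∑ k ∈ Ico 1 n, γ k ≤ 1 - Γ := fun n => by
    rw [sum_Ico_eq_sum_range]
    calc ∑ k ∈ range (n - 1), γ (1 + k)
        = ∑ k ∈ range (n - 1), Var k * ∏ i ∈ range k, (1 - Var i) :=
          sum_congr rfl fun k _ => by simp [hγ (1 + k) (Nat.le_add_right 1 k)]
      _ ≤ 1 - Γ := by rw [sum_range_mul_prod_one_sub]; linarith [hΓ_le (n - 1)]
  simpa using summable_and_tsum_le_of_le_renewal (by linarith) hγ_sum hα0 hαnn hrec

/-- Renewal inequality: if `Γ = ∏(1 − Var_k) > 0`, `γ` is the associated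
inter-arrival distribution, and a bounded nonnegative sequence `α` (indexed from 1)
satisfies `α_j ≤ γ_j + ∑_{k=1}^{j−1} γ_{j−k} α_k`, then `∑ α ≤ (1 − Γ)/Γ`. -/
theorem stmt_5 (Var : ℕ → ℝ) (hVar : ∀ k, Var k ∈ Set.Ico (0 : ℝ) 1)
    (Γ : ℝ) (hΓpos : 0 < Γ)
    (hΓ : Filter.Tendsto (fun n => ∏ k ∈ Finset.range n, (1 - Var k))
      Filter.atTop (nhds Γ))
    (γ : ℕ → ℝ)
    (hγ : ∀ k, 1 ≤ k → γ k = Var (k - 1) * ∏ i ∈ Finset.range (k - 1), (1 - Var i))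
    (α : ℕ → ℝ) (hα0 : α 0 = 0) (hαnn : ∀ j, 0 ≤ α j) (hbdd : ∃ M, ∀ j, α j ≤ M)
    (hrec : ∀ j, 1 ≤ j → α j ≤ γ j + ∑ k ∈ Finset.Ico 1 j, γ (j - k) * α k) :
    Summable α ∧ ∑' j, α j ≤ (1 - Γ) / Γ :=
  stmt_5_general Var hVar Γ hΓpos hΓ γ hγ α hα0 hαnn hrec
end

section
/- Let μ be a probability measure on A^{ℕ} (A countable discrete) satisfying a Gaussian concentration bound with constant C > 0 for all local functions with finite oscillations. Then the same bound E_μ[e^{f − E_μ[f]}] ≤ e^{C ‖δ(f)‖²₂} holds for every bounded uniformly continuous f : A^{ℕ} → ℝ with ∑_{j=0}^∞ δ_j(f)² < ∞, with the same constant C. -/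
/-!
Truncate `f` after the first `n + 1` coordinates, filling the tail with a fixed letter:
`fₙ = f ∘ truncateAt η n` is local, its coordinate oscillations are dominated by those of `f`,
and `|f - fₙ| ≤ var_n(f) = variation f n`. The bound for `fₙ` therefore gives the bound for `f`
up to a factor `exp (2 var_n(f))`, which tends to `1`.
-/

open MeasureTheory

noncomputable def osc8 {A : Type*} (f : (ℕ → A) → ℝ) (j : ℕ) : ℝ :=
  sSup {t | ∃ (ω : ℕ → A) (a b : A),
    t = |f (Function.update ω j a) - f (Function.update ω j b)|}

open Filter Topology Real

def truncateAt {A : Type*} (η : A) (n : ℕ) (ω : ℕ → A) : ℕ → A :=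
  fun i => if i ≤ n then ω i else η

def oscSet {A : Type*} (f : (ℕ → A) → ℝ) (j : ℕ) : Set ℝ :=
  {t | ∃ (ω : ℕ → A) (a b : A), t = |f (Function.update ω j a) - f (Function.update ω j b)|}

noncomputable def variation {A : Type*} (f : (ℕ → A) → ℝ) (n : ℕ) : ℝ :=
  sSup {t | ∃ ω ω' : ℕ → A, (∀ i, i ≤ n → ω i = ω' i) ∧ t = |f ω - f ω'|}

section Truncation

variable {A : Type*} (η : A) (n : ℕ)

theorem measurable_truncateAt [MeasurableSpace A] : Measurable (truncateAt η n) := by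
  refine measurable_pi_lambda _ fun i => ?_
  by_cases hi : i ≤ n
  · simpa [truncateAt, hi] using measurable_pi_apply i
  · simp [truncateAt, hi]

theorem truncateAt_apply_of_le {ω : ℕ → A} {i : ℕ} (hi : i ≤ n) : truncateAt η n ω i = ω i :=
  if_pos hi

theorem truncateAt_congr {ω ω' : ℕ → A} (h : ∀ i, i ≤ n → ω i = ω' i) :
    truncateAt η n ω = truncateAt η n ω' := by
  funext i
  by_cases hi : i ≤ n <;> simp [truncateAt, hi, h i]

theorem truncateAt_update_of_le {j : ℕ} (hj : j ≤ n) (ω : ℕ → A) (a : A) :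
    truncateAt η n (Function.update ω j a) = Function.update (truncateAt η n ω) j a := by
  funext i
  by_cases hij : i = j
  · subst hij
    simp [truncateAt, hj]
  · simp [truncateAt, Function.update_of_ne hij]

theorem truncateAt_update_of_lt {j : ℕ} (hj : n < j) (ω : ℕ → A) (a : A) :
    truncateAt η n (Function.update ω j a) = truncateAt η n ω := by
  funext i
  by_cases hi : i ≤ n
  · simp [truncateAt, hi, Function.update_of_ne (show i ≠ j by omega)]
  · simp [truncateAt, hi]

end Truncation

section Oscillation

variable {A : Type*} {f : (ℕ → A) → ℝ}

theorem osc8_nonneg [Nonempty A] {j : ℕ} (hf : BddAbove (oscSet f j)) : 0 ≤ osc8 f j := by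
  obtain ⟨a⟩ := ‹Nonempty A›
  exact le_csSup hf ⟨fun _ => a, a, a, by simp⟩

theorem oscSet_comp_truncateAt_subset (η : A) (n j : ℕ) :
    oscSet (f ∘ truncateAt η n) j ⊆ insert 0 (oscSet f j) := by
  rintro _ ⟨ω, a, b, rfl⟩
  rcases le_or_gt j n with hj | hj
  · exact Or.inr ⟨truncateAt η n ω, a, b, by simp [truncateAt_update_of_le η n hj]⟩
  · exact Or.inl (by simp [truncateAt_update_of_lt η n hj])

theorem bddAbove_oscSet_comp_truncateAt {j : ℕ} (hf : BddAbove (oscSet f j)) (η : A) (n : ℕ) :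
    BddAbove (oscSet (f ∘ truncateAt η n) j) :=
  (hf.insert 0).mono (oscSet_comp_truncateAt_subset η n j)

theorem osc8_comp_truncateAt_le {j : ℕ} (hf : BddAbove (oscSet f j)) (η : A) (n : ℕ) :
    osc8 (f ∘ truncateAt η n) j ≤ osc8 f j := by
  refine csSup_le ⟨_, fun _ => η, η, η, rfl⟩ fun t ht => ?_
  rcases oscSet_comp_truncateAt_subset η n j ht with rfl | ht
  · have : Nonempty A := ⟨η⟩
    exact osc8_nonneg hf
  · exact le_csSup hf ht

theorem tsum_osc8_comp_truncateAt_sq_le (hf : ∀ j, BddAbove (oscSet f j))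
    (hsq : Summable fun j => osc8 f j ^ 2) (η : A) (n : ℕ) :
    ∑' j, osc8 (f ∘ truncateAt η n) j ^ 2 ≤ ∑' j, osc8 f j ^ 2 := by
  have : Nonempty A := ⟨η⟩
  have hle : ∀ j, osc8 (f ∘ truncateAt η n) j ^ 2 ≤ osc8 f j ^ 2 := fun j =>
    pow_le_pow_left₀ (osc8_nonneg (bddAbove_oscSet_comp_truncateAt (hf j) η n))
      (osc8_comp_truncateAt_le (hf j) η n) 2
  exact (hsq.of_nonneg_of_le (fun _ => sq_nonneg _) hle).tsum_le_tsum hle hsq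

theorem abs_sub_comp_truncateAt_le_variation {M : ℝ} (hM : ∀ ω, |f ω| ≤ M) (η : A) (n : ℕ)
    (ω : ℕ → A) : |f ω - f (truncateAt η n ω)| ≤ variation f n := by
  refine le_csSup ⟨2 * M, ?_⟩ ⟨ω, truncateAt η n ω,
    fun i hi => (truncateAt_apply_of_le η n hi).symm, rfl⟩
  rintro _ ⟨ω, ω', -, rfl⟩
  linarith [hM ω, hM ω', abs_sub (f ω) (f ω')]

end Oscillation

theorem integral_exp_sub_integral_le_of_abs_sub_le {Ω : Type*} [MeasurableSpace Ω]
    {μ : Measure Ω} [IsProbabilityMeasure μ] {f g : Ω → ℝ} (hf : Integrable f μ)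
    (hg : Integrable g μ) {M ε : ℝ} (hgM : ∀ ω, g ω ≤ M) (hfg : ∀ ω, |f ω - g ω| ≤ ε) :
    ∫ ω, exp (f ω - ∫ x, f x ∂μ) ∂μ ≤ exp (2 * ε) * ∫ ω, exp (g ω - ∫ x, g x ∂μ) ∂μ := by
  have hint_g : ∫ x, g x ∂μ ≤ ∫ x, f x ∂μ + ε := by
    calc ∫ x, g x ∂μ ≤ ∫ x, (f x + ε) ∂μ :=
          integral_mono hg (hf.add (integrable_const ε)) fun ω => by
            linarith [neg_abs_le (f ω - g ω), hfg ω]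
      _ = ∫ x, f x ∂μ + ε := by simp [integral_add hf (integrable_const ε)]
  have hexp_g : Integrable (fun ω => exp (g ω - ∫ x, g x ∂μ)) μ := by
    refine Integrable.of_bound (continuous_exp.comp_aestronglyMeasurable
      (hg.aestronglyMeasurable.sub aestronglyMeasurable_const)) (exp (M - ∫ x, g x ∂μ))
      (ae_of_all _ fun ω => ?_)
    rw [norm_of_nonneg (exp_pos _).le, exp_le_exp]
    linarith [hgM ω]
  rw [← integral_const_mul]
  refine integral_mono_of_nonneg (ae_of_all _ fun _ => (exp_pos _).le) (hexp_g.const_mul _)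
    (ae_of_all _ fun ω => ?_)
  dsimp only
  rw [← exp_add, exp_le_exp]
  linarith [le_abs_self (f ω - g ω), hfg ω]

theorem stmt_8_general {A : Type*} [MeasurableSpace A]
    (μ : Measure (ℕ → A)) [IsProbabilityMeasure μ] (C : ℝ) (hC : 0 < C)
    (hGCB : ∀ (n : ℕ) (f : (ℕ → A) → ℝ), Measurable f →
      (∀ ω ω' : ℕ → A, (∀ i, i ≤ n → ω i = ω' i) → f ω = f ω') →
      (∀ j, BddAbove {t | ∃ (ω : ℕ → A) (a b : A),
        t = |f (Function.update ω j a) - f (Function.update ω j b)|}) →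
      ∫ ω, Real.exp (f ω - ∫ x, f x ∂μ) ∂μ ≤ Real.exp (C * ∑' j, (osc8 f j) ^ 2))
    (f : (ℕ → A) → ℝ) (hfm : Measurable f)
    (M : ℝ) (hbd : ∀ ω, |f ω| ≤ M)
    (huc : Filter.Tendsto
      (fun n => sSup {t | ∃ ω ω' : ℕ → A, (∀ i, i ≤ n → ω i = ω' i) ∧ t = |f ω - f ω'|})
      Filter.atTop (nhds 0))
    (hbdd : ∀ j, BddAbove {t | ∃ (ω : ℕ → A) (a b : A),
      t = |f (Function.update ω j a) - f (Function.update ω j b)|})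
    (hsq : Summable fun j => (osc8 f j) ^ 2) :
    ∫ ω, Real.exp (f ω - ∫ x, f x ∂μ) ∂μ ≤ Real.exp (C * ∑' j, (osc8 f j) ^ 2) := by
  obtain ⟨η⟩ : Nonempty A := ⟨(nonempty_of_isProbabilityMeasure μ).some 0⟩
  have integrable_of_abs_le :
      ∀ {g : (ℕ → A) → ℝ}, Measurable g → (∀ ω, |g ω| ≤ M) → Integrable g μ :=
    fun hg hgM => .of_bound hg.aestronglyMeasurable M (ae_of_all _ hgM)
  have key : ∀ n, ∫ ω, exp (f ω - ∫ x, f x ∂μ) ∂μ ≤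
      exp (2 * variation f n) * exp (C * ∑' j, osc8 f j ^ 2) := by
    intro n
    have hfn := hfm.comp (measurable_truncateAt η n)
    calc ∫ ω, exp (f ω - ∫ x, f x ∂μ) ∂μ
        ≤ exp (2 * variation f n) *
            ∫ ω, exp ((f ∘ truncateAt η n) ω - ∫ x, (f ∘ truncateAt η n) x ∂μ) ∂μ :=
          integral_exp_sub_integral_le_of_abs_sub_le (integrable_of_abs_le hfm hbd)
            (integrable_of_abs_le hfn fun _ => hbd _)
            (fun _ => (le_abs_self _).trans (hbd _))
            (abs_sub_comp_truncateAt_le_variation hbd η n)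
      _ ≤ exp (2 * variation f n) * exp (C * ∑' j, osc8 f j ^ 2) := by
        gcongr
        refine (hGCB n _ hfn (fun ω ω' h => congrArg f (truncateAt_congr η n h))
          (fun j => bddAbove_oscSet_comp_truncateAt (hbdd j) η n)).trans ?_
        exact exp_le_exp.mpr (mul_le_mul_of_nonneg_left
          (tsum_osc8_comp_truncateAt_sq_le hbdd hsq η n) hC.le)
  have hlim : Tendsto (fun n => exp (2 * variation f n) * exp (C * ∑' j, osc8 f j ^ 2))
      atTop (𝓝 (exp (C * ∑' j, osc8 f j ^ 2))) := by
    simpa [variation] using ((huc.const_mul 2).rexp).mul_const (exp (C * ∑' j, osc8 f j ^ 2))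
  exact ge_of_tendsto' hlim key

/-- If `μ` satisfies a Gaussian concentration bound with constant `C` for all
local functions with finite coordinate oscillations, then the same bound holds for every
bounded uniformly continuous `f` (i.e. `var_n(f) → 0`) with `∑_j δ_j(f)² < ∞`,
with the same constant. -/
theorem stmt_8 {A : Type*} [Countable A] [MeasurableSpace A] [MeasurableSingletonClass A]
    (μ : Measure (ℕ → A)) [IsProbabilityMeasure μ] (C : ℝ) (hC : 0 < C)
    (hGCB : ∀ (n : ℕ) (f : (ℕ → A) → ℝ), Measurable f →
      (∀ ω ω' : ℕ → A, (∀ i, i ≤ n → ω i = ω' i) → f ω = f ω') →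
      (∀ j, BddAbove {t | ∃ (ω : ℕ → A) (a b : A),
        t = |f (Function.update ω j a) - f (Function.update ω j b)|}) →
      ∫ ω, Real.exp (f ω - ∫ x, f x ∂μ) ∂μ ≤ Real.exp (C * ∑' j, (osc8 f j) ^ 2))
    (f : (ℕ → A) → ℝ) (hfm : Measurable f)
    (M : ℝ) (hbd : ∀ ω, |f ω| ≤ M)
    (huc : Filter.Tendsto
      (fun n => sSup {t | ∃ ω ω' : ℕ → A, (∀ i, i ≤ n → ω i = ω' i) ∧ t = |f ω - f ω'|})
      Filter.atTop (nhds 0))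
    (hbdd : ∀ j, BddAbove {t | ∃ (ω : ℕ → A) (a b : A),
      t = |f (Function.update ω j a) - f (Function.update ω j b)|})
    (hsq : Summable fun j => (osc8 f j) ^ 2) :
    ∫ ω, Real.exp (f ω - ∫ x, f x ∂μ) ∂μ ≤ Real.exp (C * ∑' j, (osc8 f j) ^ 2) :=
  stmt_8_general μ C hC hGCB f hfm M hbd huc hbdd hsq
end

section
/- Suppose a probability measure μ on A^{ℕ} (A countable) satisfies a Gaussian concentration bound with constant C. Then for every n ≥ 0, every nonempty F ⊆ A^{n+1} with μ(F) > 0, and every ε > 2√(C log(1/μ(F))/(n+1)), the ε-blowup ⟨F⟩_ε in the normalized Hamming distance satisfies μ(⟨F⟩_ε) ≥ 1 − exp(−((n+1)/(4C)) (ε − 2√(C log(1/μ(F))/(n+1)))²). -/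
/-!
The Hamming distance `f` from the first `n + 1` coordinates of `ω` to `F` changes by at most `1`
when one of these coordinates changes and not at all otherwise, so GCB makes `f - E f`
sub-Gaussian with variance proxy `2C(n+1)`. Since `f = 0` on `F`, the Chernoff bound for
`E f - f` bounds `E f` by `2√(C(n+1) log(1/μ(F)))`, and the Chernoff bound for `f - E f` then
controls the complement `{f ≥ (n+1)ε}` of the blow-up.
-/

open MeasureTheory ProbabilityTheory Real Hamming
open scoped NNReal

theorem hammingDist_update_le_one {ι : Type*} [Fintype ι] [DecidableEq ι] {β : ι → Type*}
    [∀ i, DecidableEq (β i)] (x : ∀ i, β i) (i : ι) (a b : β i) :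
    hammingDist (Function.update x i a) (Function.update x i b) ≤ 1 := by
  refine (Finset.card_le_card fun k hk ↦ ?_).trans (Finset.card_singleton i).le
  by_contra hki
  simp_all [Function.update_of_ne (Finset.notMem_singleton.1 hki)]

section Hamming

variable {A : Type*} [DecidableEq A] {m : ℕ}

noncomputable def hammingInfDist (F : Set (Fin m → A)) (ω : ℕ → A) : ℝ :=
  Metric.infDist (toHamming fun i : Fin m ↦ ω i) (toHamming '' F)

variable (F : Set (Fin m → A))

theorem measurable_hammingInfDist [Countable A] [MeasurableSpace A] [MeasurableSingletonClass A] :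
    Measurable (hammingInfDist F) :=
  (measurable_of_countable fun x : Fin m → A ↦
    Metric.infDist (toHamming x) (toHamming '' F)).comp (by fun_prop)

theorem hammingInfDist_mem_Icc (ω : ℕ → A) : hammingInfDist F ω ∈ Set.Icc 0 (m : ℝ) := by
  refine ⟨Metric.infDist_nonneg, ?_⟩
  unfold hammingInfDist
  rcases F.eq_empty_or_nonempty with rfl | ⟨σ, hσ⟩
  · simp
  · refine (Metric.infDist_le_dist_of_mem (Set.mem_image_of_mem _ hσ)).trans ?_
    rw [Hamming.dist_eq_hammingDist]
    exact_mod_cast hammingDist_le_card_fintype.trans (Fintype.card_fin m).le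

theorem hammingInfDist_eq_zero {ω : ℕ → A} (h : (fun i : Fin m ↦ ω i) ∈ F) :
    hammingInfDist F ω = 0 :=
  show Metric.infDist _ _ = 0 from Metric.infDist_zero_of_mem (Set.mem_image_of_mem _ h)

theorem abs_hammingInfDist_update_sub_le (ω : ℕ → A) (j : ℕ) (a b : A) :
    |hammingInfDist F (Function.update ω j a) - hammingInfDist F (Function.update ω j b)| ≤
      if j < m then 1 else 0 := by
  rw [← Real.dist_eq]
  unfold hammingInfDist
  refine ((Metric.lipschitz_infDist_pt _).dist_le_mul _ _).trans ?_
  rw [NNReal.coe_one, one_mul, Hamming.dist_eq_hammingDist]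
  split_ifs with hj
  · have hres (c : A) : (fun i : Fin m ↦ Function.update ω j c i) =
        Function.update (fun i : Fin m ↦ ω i) ⟨j, hj⟩ c := by
      ext i
      simp [Function.update, Fin.ext_iff]
    simp only [ofHamming_toHamming, hres]
    exact_mod_cast hammingDist_update_le_one (ι := Fin m) (β := fun _ ↦ A) _ _ a b
  · have hres (c : A) : (fun i : Fin m ↦ Function.update ω j c i) = fun i : Fin m ↦ ω i := by
      ext i
      exact Function.update_of_ne (by omega) _ _
    simp [hres]

theorem exists_hammingDist_lt_of_hammingInfDist_lt (hF : F.Nonempty) {ω : ℕ → A} {r : ℝ}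
    (h : hammingInfDist F ω < r) :
    ∃ σ ∈ F, (hammingDist σ (fun i : Fin m ↦ ω i) : ℝ) < r := by
  obtain ⟨_, ⟨σ, hσ, rfl⟩, hlt⟩ := (Metric.infDist_lt_iff (hF.image toHamming)).1 h
  refine ⟨σ, hσ, ?_⟩
  rwa [Hamming.dist_eq_hammingDist, hammingDist_comm] at hlt

end Hamming

namespace ProbabilityTheory.HasSubgaussianMGF

variable {Ω : Type*} [MeasurableSpace Ω] {μ : Measure Ω} [IsFiniteMeasure μ] {f : Ω → ℝ}
  {c : ℝ≥0} {s : Set Ω}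

theorem integral_le_sqrt_of_nonpos_on (h : HasSubgaussianMGF (fun ω ↦ f ω - μ[f]) c μ)
    (hc : 0 < c) (hs : ∀ ω ∈ s, f ω ≤ 0) (hs0 : 0 < μ.real s) :
    μ[f] ≤ √(2 * c * log (1 / μ.real s)) := by
  rcases le_or_gt μ[f] 0 with hI | hI
  · exact hI.trans (Real.sqrt_nonneg _)
  have hsub : s ⊆ {ω | μ[f] ≤ (-fun ω ↦ f ω - μ[f]) ω} := fun ω hω ↦ by
    show μ[f] ≤ -(f ω - μ[f])
    linarith [hs ω hω]
  have hmeas : μ.real s ≤ exp (-μ[f] ^ 2 / (2 * c)) :=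
    (measureReal_mono hsub).trans (h.neg.measure_ge_le hI.le)
  rw [← Real.log_le_iff_le_exp hs0] at hmeas
  rw [Real.le_sqrt' hI, one_div, Real.log_inv]
  rw [le_div_iff₀ (by positivity)] at hmeas
  nlinarith

theorem measureReal_ge_le_of_nonpos_on (h : HasSubgaussianMGF (fun ω ↦ f ω - μ[f]) c μ)
    (hc : 0 < c) (hs : ∀ ω ∈ s, f ω ≤ 0) (hs0 : 0 < μ.real s) {r : ℝ}
    (hr : √(2 * c * log (1 / μ.real s)) ≤ r) :
    μ.real {ω | r ≤ f ω} ≤ exp (-(r - √(2 * c * log (1 / μ.real s))) ^ 2 / (2 * c)) := by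
  have hI := h.integral_le_sqrt_of_nonpos_on hc hs hs0
  have hshift : {ω | r ≤ f ω} = {ω | r - μ[f] ≤ f ω - μ[f]} := by
    ext ω
    simp
  rw [hshift]
  refine (h.measure_ge_le (by linarith)).trans (exp_le_exp.2 ?_)
  gcongr

end ProbabilityTheory.HasSubgaussianMGF

section GaussianConcentration

variable {A : Type*} [MeasurableSpace A] {μ : Measure (ℕ → A)} {C : ℝ}

/-- GCB with constant `C`; `δ j` may be any bound on the oscillation of `f` in coordinate `j`. -/
def HasGaussianConcentration (μ : Measure (ℕ → A)) (C : ℝ) : Prop :=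
  ∀ (f : (ℕ → A) → ℝ), Measurable f → ∀ δ : ℕ → ℝ, (∀ j, 0 ≤ δ j) →
    (∀ (ω : ℕ → A) (j : ℕ) (a b : A),
      |f (Function.update ω j a) - f (Function.update ω j b)| ≤ δ j) →
    (Summable fun j => δ j ^ 2) →
    ∀ θ : ℝ, ∫ ω, Real.exp (θ * (f ω - ∫ x, f x ∂μ)) ∂μ ≤
      Real.exp (C * θ ^ 2 * ∑' j, δ j ^ 2)

theorem HasGaussianConcentration.hasSubgaussianMGF_hammingInfDist [Countable A] [DecidableEq A]
    [MeasurableSingletonClass A] [IsFiniteMeasure μ] (h : HasGaussianConcentration μ C)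
    (hC : 0 ≤ C) {m : ℕ} (F : Set (Fin m → A)) :
    HasSubgaussianMGF (fun ω ↦ hammingInfDist F ω - μ[hammingInfDist F])
      (2 * C * m).toNNReal μ := by
  have hf := measurable_hammingInfDist F
  have hδ : ∑' j : ℕ, (if j < m then (1 : ℝ) else 0) ^ 2 = m := by
    rw [tsum_eq_sum (s := Finset.range m) (by simp_all),
      Finset.sum_congr rfl fun j hj ↦ show _ = (1 : ℝ) by simp [Finset.mem_range.1 hj]]
    simp
  refine ⟨fun t ↦ integrable_exp_mul_of_mem_Icc (a := 0 - μ[hammingInfDist F])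
    (b := m - μ[hammingInfDist F]) (hf.sub_const _).aemeasurable (ae_of_all _ fun ω ↦ ?_),
    fun t ↦ ?_⟩
  · have := hammingInfDist_mem_Icc F ω
    exact ⟨by linarith [this.1], by linarith [this.2]⟩
  · calc mgf _ μ t = ∫ ω, exp (t * (hammingInfDist F ω - μ[hammingInfDist F])) ∂μ := rfl
      _ ≤ _ := h _ hf _ (fun j ↦ by positivity) (abs_hammingInfDist_update_sub_le F)
          (summable_of_ne_finset_zero (s := Finset.range m) (by simp_all)) t
      _ = exp ((2 * C * m).toNNReal * t ^ 2 / 2) := by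
          rw [hδ, Real.coe_toNNReal _ (by positivity)]
          ring_nf

end GaussianConcentration

/-- GCB implies a quantitative blowing-up property: for any
`F ⊆ A^{n+1}` of positive measure and any
`ε > 2√(C log(1/μ(F))/(n+1))`, the `ε`-blowup of `F` in the normalized Hamming distance
has measure at least `1 − exp(−((n+1)/(4C))(ε − 2√(C log(1/μ(F))/(n+1)))²)`. -/
theorem stmt_11 {A : Type*} [Countable A] [DecidableEq A]
    [MeasurableSpace A] [MeasurableSingletonClass A]
    (μ : Measure (ℕ → A)) [IsProbabilityMeasure μ] (C : ℝ) (hC : 0 < C)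
    (hGCB : ∀ (f : (ℕ → A) → ℝ), Measurable f → ∀ δ : ℕ → ℝ, (∀ j, 0 ≤ δ j) →
      (∀ (ω : ℕ → A) (j : ℕ) (a b : A),
        |f (Function.update ω j a) - f (Function.update ω j b)| ≤ δ j) →
      (Summable fun j => δ j ^ 2) →
      ∀ θ : ℝ, ∫ ω, Real.exp (θ * (f ω - ∫ x, f x ∂μ)) ∂μ ≤
        Real.exp (C * θ ^ 2 * ∑' j, δ j ^ 2))
    (n : ℕ) (F : Set (Fin (n + 1) → A))
    (E : Set (ℕ → A)) (hE : E = {ω | (fun i : Fin (n + 1) => ω i.1) ∈ F})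
    (hpos : 0 < (μ E).toReal)
    (ε : ℝ)
    (hε : 2 * Real.sqrt (C * Real.log (1 / (μ E).toReal) / (n + 1)) < ε) :
    1 - Real.exp (-((n + 1) / (4 * C)) *
        (ε - 2 * Real.sqrt (C * Real.log (1 / (μ E).toReal) / (n + 1))) ^ 2)
      ≤ (μ {ω | ∃ σ ∈ F,
          (((Finset.univ.filter fun i : Fin (n + 1) => σ i ≠ ω i.1).card : ℝ) / (n + 1))
            ≤ ε}).toReal := by
  simp only [← measureReal_def] at hpos hε ⊢
  set M : ℝ := n + 1
  have hMpos : 0 < M := by positivity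
  set L := log (1 / μ.real E)
  set B := √(C * L / M)
  set f := hammingInfDist F
  have hsub := HasGaussianConcentration.hasSubgaussianMGF_hammingInfDist hGCB hC.le F
  set c := (2 * C * ((n + 1 : ℕ) : ℝ)).toNNReal
  have hc : (c : ℝ) = 2 * C * M := by
    rw [Real.coe_toNNReal _ (by positivity)]
    push_cast
    rfl
  have hE0 : ∀ ω ∈ E, f ω ≤ 0 := hE ▸ fun ω hω ↦ (hammingInfDist_eq_zero F hω).le
  have hF : F.Nonempty := by
    obtain ⟨ω, hω⟩ := nonempty_of_measure_ne_zero (ENNReal.toReal_pos_iff.1 hpos).1.ne'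
    exact ⟨_, hE ▸ hω⟩
  have hS : √(2 * c * L) = M * (2 * B) := by
    rw [hc, show 2 * (2 * C * M) * L = (2 * M) ^ 2 * (C * L / M) by field_simp,
      Real.sqrt_mul (by positivity), Real.sqrt_sq (by positivity)]
    ring
  have htail := hsub.measureReal_ge_le_of_nonpos_on (by positivity) hE0 hpos (r := M * ε)
    (by rw [hS]; gcongr)
  have hcover : {ω | M * ε ≤ f ω}ᶜ ⊆ {ω | ∃ σ ∈ F,
      (((Finset.univ.filter fun i : Fin (n + 1) => σ i ≠ ω i.1).card : ℝ) / (n + 1)) ≤ ε} := by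
    intro ω hω
    obtain ⟨σ, hσ, hlt⟩ := exists_hammingDist_lt_of_hammingInfDist_lt F hF (not_le.1 hω)
    exact ⟨σ, hσ, (div_le_iff₀' hMpos).2 hlt.le⟩
  calc _ ≤ 1 - μ.real {ω | M * ε ≤ f ω} := by
        rw [hS, hc, show -(M * ε - M * (2 * B)) ^ 2 / (2 * (2 * C * M)) =
          -(M / (4 * C)) * (ε - 2 * B) ^ 2 by field_simp; ring] at htail
        linarith
    _ = μ.real {ω | M * ε ≤ f ω}ᶜ := (probReal_compl_eq_one_sub
      (measurableSet_le measurable_const (measurable_hammingInfDist F))).symm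
    _ ≤ _ := measureReal_mono hcover
end

section
/- If a probability measure μ satisfies GCB with constant C, then for every n ≥ 0 and every F ⊆ A^{n+1}, the function f(ω) = inf_{σ ∈ F} ∑_{i=0}^n 1_{σ_i ≠ ω_i} satisfies E_μ[f] ≤ 2√(C(n+1) log(1/μ(F))). -/
/-! `f` is the distance in the Hamming metric from the first `n + 1` coordinates to `F`. It is
`1`-Lipschitz in each of these coordinates and ignores the others, so GCB gives
`E exp(-t (f - E f)) ≤ exp(C (n + 1) t²)`. As `f ≥ 0` vanishes on `E`, the left side is at least
`μ(E) exp(t E f)`; hence `E f ≤ C (n + 1) t + log(1 / μ(E)) / t` for all `t > 0`, and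
`t = √(log(1 / μ(E)) / (C (n + 1)))` gives the bound. -/

open MeasureTheory Real Hamming

theorem hammingDist_le_one_of_forall_ne {ι : Type*} [Fintype ι] {β : ι → Type*}
    [∀ i, DecidableEq (β i)] {x y : ∀ i, β i} (i₀ : ι) (h : ∀ i ≠ i₀, x i = y i) :
    hammingDist x y ≤ 1 := by
  calc hammingDist x y ≤ ({i₀} : Finset ι).card :=
        Finset.card_le_card fun i hi => by
          by_contra hne
          exact (Finset.mem_filter.1 hi).2 (h i (Finset.notMem_singleton.1 hne))
    _ = 1 := Finset.card_singleton i₀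

theorem hammingDist_restrict_update_le {A : Type*} [DecidableEq A] (m : ℕ) (ω : ℕ → A) (j : ℕ)
    (a b : A) :
    (hammingDist (fun i : Fin m => Function.update ω j a i)
      (fun i : Fin m => Function.update ω j b i) : ℝ) ≤ if j < m then 1 else 0 := by
  split_ifs with hj
  · exact_mod_cast hammingDist_le_one_of_forall_ne (⟨j, hj⟩ : Fin m) fun i hi => by
      simp [Function.update_of_ne (Fin.val_ne_of_ne hi)]
  · have : ∀ i : Fin m, (i : ℕ) ≠ j := fun i h => hj (h ▸ i.2)
    simp [Function.update_of_ne (this _)]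

theorem infDist_toHamming_eq_sInf {ι : Type*} [Fintype ι] {β : ι → Type*}
    [∀ i, DecidableEq (β i)] (F : Set (∀ i, β i)) (x : ∀ i, β i) :
    Metric.infDist (toHamming x) (ofHamming ⁻¹' F) =
      sInf {t : ℝ | ∃ σ ∈ F, t = hammingDist σ x} := by
  rw [Metric.infDist_eq_iInf, iInf]
  congr 1
  ext t
  simp only [Set.mem_ofPred_eq, Set.mem_range, Subtype.exists, Set.mem_preimage, exists_prop,
    dist_eq_hammingDist, ofHamming_toHamming, hammingDist_comm x]
  exact ⟨fun ⟨a, ha, h⟩ => ⟨ofHamming a, ha, h.symm⟩,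
    fun ⟨σ, hσ, h⟩ => ⟨toHamming σ, hσ, h.symm⟩⟩

theorem tsum_ite_lt_sq (m : ℕ) : ∑' j : ℕ, (if j < m then (1 : ℝ) else 0) ^ 2 = m := by
  rw [tsum_eq_sum (s := Finset.range m) fun j hj => by simp_all]
  simp [ite_pow, Finset.filter_true_of_mem fun j hj => Finset.mem_range.1 hj]

theorem le_two_sqrt_mul_of_forall_le {m K L : ℝ} (hK : 0 < K) (hL : 0 ≤ L)
    (h : ∀ t > 0, m ≤ K * t + L / t) : m ≤ 2 * √(K * L) := by
  rcases hL.eq_or_lt with rfl | hL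
  · refine le_of_forall_pos_le_add fun ε hε => ?_
    have := h (ε / K) (by positivity)
    rw [mul_div_cancel₀ _ hK.ne', zero_div, add_zero] at this
    simpa using this
  · have hK' : √K ≠ 0 := (sqrt_pos.2 hK).ne'
    have hL' : √L ≠ 0 := (sqrt_pos.2 hL).ne'
    have := h (√L / √K) (by positivity)
    calc m ≤ K * (√L / √K) + L / (√L / √K) := this
      _ = 2 * √(K * L) := by
        rw [sqrt_mul hK.le]
        nth_rw 1 [← sq_sqrt hK.le]; nth_rw 2 [← sq_sqrt hL.le]
        field_simp
        ring

theorem measureReal_le_integral_exp_neg_mul {Ω : Type*} [MeasurableSpace Ω] {μ : Measure Ω}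
    [IsFiniteMeasure μ] {f : Ω → ℝ} (hf : Measurable f) (hf0 : ∀ ω, 0 ≤ f ω) {E : Set Ω}
    (hE : MeasurableSet E) (hfE : ∀ ω ∈ E, f ω = 0) {t : ℝ} (ht : 0 ≤ t) :
    μ.real E ≤ ∫ ω, exp (-t * f ω) ∂μ := by
  have hint : Integrable (fun ω => exp (-t * f ω)) μ := by
    refine (integrable_const (1 : ℝ)).mono' (hf.const_mul _).exp.aestronglyMeasurable ?_
    refine Filter.Eventually.of_forall fun ω => ?_
    rw [norm_of_nonneg (exp_pos _).le, exp_le_one_iff]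
    nlinarith [hf0 ω]
  calc μ.real E = ∫ ω in E, exp (-t * f ω) ∂μ := by
        rw [setIntegral_congr_fun hE (g := fun _ => 1) fun ω hω => by simp [hfE ω hω]]
        simp
    _ ≤ ∫ ω, exp (-t * f ω) ∂μ :=
        setIntegral_le_integral hint (Filter.Eventually.of_forall fun ω => (exp_pos _).le)

theorem integral_le_of_integral_exp_neg_le {Ω : Type*} [MeasurableSpace Ω] {μ : Measure Ω}
    [IsFiniteMeasure μ] {f : Ω → ℝ} (hf : Measurable f) (hf0 : ∀ ω, 0 ≤ f ω) {E : Set Ω}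
    (hE : MeasurableSet E) (hfE : ∀ ω ∈ E, f ω = 0) (hμE : 0 < μ.real E) {K t : ℝ} (ht : 0 < t)
    (hmgf : ∫ ω, exp (-t * (f ω - ∫ x, f x ∂μ)) ∂μ ≤ exp (K * t ^ 2)) :
    ∫ ω, f ω ∂μ ≤ K * t + log (1 / μ.real E) / t := by
  set m := ∫ x, f x ∂μ
  have hsplit : ∫ ω, exp (-t * (f ω - m)) ∂μ = (∫ ω, exp (-t * f ω) ∂μ) * exp (t * m) := by
    rw [← integral_mul_const]
    congr 1 with ω
    rw [← exp_add]
    ring_nf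
  have hchernoff : μ.real E * exp (t * m) ≤ exp (K * t ^ 2) := by
    grw [measureReal_le_integral_exp_neg_mul hf hf0 hE hfE ht.le, ← hsplit]
    exact hmgf
  have hlog : log (μ.real E) + t * m ≤ K * t ^ 2 := by
    simpa [log_mul hμE.ne' (exp_ne_zero _)] using log_le_log (by positivity) hchernoff
  rw [one_div, log_inv, ← sub_le_iff_le_add', le_div_iff₀ ht]
  linarith

theorem integral_le_two_sqrt_of_forall_integral_exp_neg_le {Ω : Type*} [MeasurableSpace Ω]
    {μ : Measure Ω} [IsProbabilityMeasure μ] {f : Ω → ℝ} (hf : Measurable f)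
    (hf0 : ∀ ω, 0 ≤ f ω) {E : Set Ω} (hE : MeasurableSet E) (hfE : ∀ ω ∈ E, f ω = 0)
    (hμE : 0 < μ.real E) {K : ℝ} (hK : 0 < K)
    (hmgf : ∀ t > 0, ∫ ω, exp (-t * (f ω - ∫ x, f x ∂μ)) ∂μ ≤ exp (K * t ^ 2)) :
    ∫ ω, f ω ∂μ ≤ 2 * √(K * log (1 / μ.real E)) :=
  le_two_sqrt_mul_of_forall_le hK (log_nonneg (one_le_one_div hμE measureReal_le_one))
    fun t ht => integral_le_of_integral_exp_neg_le hf hf0 hE hfE hμE ht (hmgf t ht)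

theorem stmt_12_general {A : Type*} [Countable A] [DecidableEq A]
    [MeasurableSpace A] [MeasurableSingletonClass A]
    (μ : Measure (ℕ → A)) [IsProbabilityMeasure μ] (C : ℝ) (hC : 0 < C)
    (hGCB : ∀ (f : (ℕ → A) → ℝ), Measurable f → ∀ δ : ℕ → ℝ, (∀ j, 0 ≤ δ j) →
      (∀ (ω : ℕ → A) (j : ℕ) (a b : A),
        |f (Function.update ω j a) - f (Function.update ω j b)| ≤ δ j) →
      (Summable fun j => δ j ^ 2) →
      ∀ θ : ℝ, ∫ ω, Real.exp (θ * (f ω - ∫ x, f x ∂μ)) ∂μ ≤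
        Real.exp (C * θ ^ 2 * ∑' j, δ j ^ 2))
    (n : ℕ) (F : Set (Fin (n + 1) → A))
    (E : Set (ℕ → A)) (hE : E = {ω | (fun i : Fin (n + 1) => ω i.1) ∈ F})
    (hpos : 0 < (μ E).toReal)
    (f : (ℕ → A) → ℝ)
    (hf : ∀ ω, f ω = sInf {t : ℝ | ∃ σ ∈ F,
      t = ((Finset.univ.filter fun i : Fin (n + 1) => σ i ≠ ω i.1).card : ℝ)}) :
    ∫ ω, f ω ∂μ ≤ 2 * Real.sqrt (C * (n + 1) * Real.log (1 / (μ E).toReal)) := by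
  set proj : (ℕ → A) → (Fin (n + 1) → A) := fun ω i => ω i
  set g : (Fin (n + 1) → A) → ℝ := fun v => Metric.infDist (toHamming v) (ofHamming ⁻¹' F)
  have hproj : Measurable proj := measurable_pi_lambda _ fun i => measurable_pi_apply _
  obtain rfl : f = g ∘ proj :=
    funext fun ω => (hf ω).trans (infDist_toHamming_eq_sInf F (proj ω)).symm
  subst hE
  set δ : ℕ → ℝ := fun j => if j < n + 1 then 1 else 0
  have hLip (ω : ℕ → A) (j : ℕ) (a b : A) :
      |g (proj (Function.update ω j a)) - g (proj (Function.update ω j b))| ≤ δ j := by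
    have := (Metric.lipschitz_infDist_pt (ofHamming ⁻¹' F)).dist_le_mul
      (toHamming (proj (Function.update ω j a))) (toHamming (proj (Function.update ω j b)))
    rw [Real.dist_eq, NNReal.coe_one, one_mul, dist_eq_hammingDist] at this
    exact this.trans (hammingDist_restrict_update_le (n + 1) ω j a b)
  have hmeas : Measurable (g ∘ proj) := (measurable_of_countable g).comp hproj
  refine integral_le_two_sqrt_of_forall_integral_exp_neg_le hmeas
    (fun ω => Metric.infDist_nonneg) (hproj F.to_countable.measurableSet)
    (fun ω hω => Metric.infDist_zero_of_mem hω) hpos (by positivity) fun t ht => ?_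
  have := hGCB _ hmeas δ (fun j => by positivity) hLip
    (summable_of_ne_finset_zero (s := Finset.range (n + 1)) fun j hj => by simp_all [δ]) (-t)
  rwa [tsum_ite_lt_sq, neg_sq, mul_right_comm, Nat.cast_succ] at this

/-- Under GCB with constant `C`, the (unnormalized) Hamming distance to a set
`F ⊆ A^{n+1}`, `f(ω) = inf_{σ ∈ F} #{i : σ_i ≠ ω_i}`, has expectation at most
`2√(C(n+1) log(1/μ(F)))`. -/
theorem stmt_12 {A : Type*} [Countable A] [DecidableEq A]
    [MeasurableSpace A] [MeasurableSingletonClass A]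
    (μ : Measure (ℕ → A)) [IsProbabilityMeasure μ] (C : ℝ) (hC : 0 < C)
    (hGCB : ∀ (f : (ℕ → A) → ℝ), Measurable f → ∀ δ : ℕ → ℝ, (∀ j, 0 ≤ δ j) →
      (∀ (ω : ℕ → A) (j : ℕ) (a b : A),
        |f (Function.update ω j a) - f (Function.update ω j b)| ≤ δ j) →
      (Summable fun j => δ j ^ 2) →
      ∀ θ : ℝ, ∫ ω, Real.exp (θ * (f ω - ∫ x, f x ∂μ)) ∂μ ≤
        Real.exp (C * θ ^ 2 * ∑' j, δ j ^ 2))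
    (n : ℕ) (F : Set (Fin (n + 1) → A)) (hF : F.Nonempty)
    (E : Set (ℕ → A)) (hE : E = {ω | (fun i : Fin (n + 1) => ω i.1) ∈ F})
    (hpos : 0 < (μ E).toReal)
    (f : (ℕ → A) → ℝ)
    (hf : ∀ ω, f ω = sInf {t : ℝ | ∃ σ ∈ F,
      t = ((Finset.univ.filter fun i : Fin (n + 1) => σ i ≠ ω i.1).card : ℝ)}) :
    ∫ ω, f ω ∂μ ≤ 2 * Real.sqrt (C * (n + 1) * Real.log (1 / (μ E).toReal)) :=
  stmt_12_general μ C hC hGCB n F E hE hpos f hf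
end
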